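/- arXiv:2008.04394 — 4 statements merged into one kernel-verified Lean document; each statement's English description precedes it below -/
import Mathlib

section
/- Consider K subgroups g = 1,…,K, each with treated set T_g of size n_{1g} > 0 and control set C_g, covariate vectors φ_i ∈ ℝ^p, and weights γ_i on control units; let n₁ = Σ_g n_{1g}. Suppose each control outcome satisfies Y_i = ⟨η_{G_i}, φ_i⟩ + ε_i, where η_g ∈ ℝ^p is a subgroup-specific coefficient vector, and let η̄ = (1/K) Σ_{g=1}^K η_g. Define μ̂_{0g} = (1/n_{1g}) Σ_{i∈C_g} γ_i Y_i, the aggregated estimator μ̂₀ = Σ_{g=1}^K (n_{1g}/n₁) μ̂_{0g}, and the oracle quantity μ̃₀ = (1/n₁) Σ_{g=1}^K Σ_{i∈T_g} ⟨η_g, φ_i⟩. Then the error decomposes exactly as μ̂₀ − μ̃₀ = ⟨η̄, (1/n₁) Σ_{i control} γ_i φ_i − (1/n₁) Σ_{i treated} φ_i⟩ + Σ_{g=1}^K (n_{1g}/n₁) ⟨η_g − η̄, (1/n_{1g}) Σ_{i∈C_g} γ_i φ_i − (1/n_{1g}) Σ_{i∈T_g} φ_i⟩ + (1/n₁) Σ_{i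 control} γ_i ε_i, i.e., a global-imbalance term for the average coefficient, a sum of local-imbalance terms for the coefficient deviations, and a weighted noise term. -/
/-!
With `D g = ∑_{C g} γ i • φ i - ∑_{T g} φ i` the imbalance of subgroup `g`, both sides equal
`N1⁻¹ * (∑ g, ⟪η g, D g⟫ + ∑ γ i * ε i)`: the subgroup weight `n1 g / N1` cancels the
normalisation `1 / n1 g`, and writing `η g = ηbar + (η g - ηbar)` splits `∑ g, ⟪η g, D g⟫`
into the global and local terms.
-/

open scoped RealInnerProductSpace

open Finset

section

variable {E : Type*} [NormedAddCommGroup E] [InnerProductSpace ℝ E]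

theorem sum_inner_eq_inner_sum_add_sum_inner_sub {κ : Type*} (s : Finset κ) (η D : κ → E)
    (c : E) :
    ∑ g ∈ s, ⟪η g, D g⟫ = ⟪c, ∑ g ∈ s, D g⟫ + ∑ g ∈ s, ⟪η g - c, D g⟫ := by
  simp only [inner_sub_left, sum_sub_distrib, inner_sum]
  ring

theorem sum_mul_eq_inner_sum_smul_add_sum_mul {ι : Type*} (C : Finset ι) (γ ε Y : ι → ℝ)
    (φ : ι → E) (η : E) (hY : ∀ i ∈ C, Y i = ⟪η, φ i⟫ + ε i) :
    ∑ i ∈ C, γ i * Y i = ⟪η, ∑ i ∈ C, γ i • φ i⟫ + ∑ i ∈ C, γ i * ε i := by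
  rw [inner_sum, ← sum_add_distrib]
  refine sum_congr rfl fun i hi => ?_
  rw [hY i hi, inner_smul_right]
  ring

end

theorem aggregated_error_decomposition_general {ι : Type*} {p K : ℕ}
    (T C : Fin K → Finset ι)
    (n1 : Fin K → ℕ) (hpos : ∀ g, 0 < n1 g)
    (N1 : ℕ)
    (φ : ι → EuclideanSpace ℝ (Fin p)) (γ ε Y : ι → ℝ)
    (η : Fin K → EuclideanSpace ℝ (Fin p))
    (ηbar : EuclideanSpace ℝ (Fin p))
    (hY : ∀ g, ∀ i ∈ C g, Y i = ⟪η g, φ i⟫ + ε i) :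
    (∑ g, ((n1 g : ℝ) / (N1 : ℝ)) * ((1 / (n1 g : ℝ)) * ∑ i ∈ C g, γ i * Y i))
        - (1 / (N1 : ℝ)) * ∑ g, ∑ i ∈ T g, ⟪η g, φ i⟫
      = ⟪ηbar, (N1 : ℝ)⁻¹ • (∑ g, ∑ i ∈ C g, γ i • φ i)
              - (N1 : ℝ)⁻¹ • (∑ g, ∑ i ∈ T g, φ i)⟫
        + (∑ g, ((n1 g : ℝ) / (N1 : ℝ)) *
            ⟪η g - ηbar, (n1 g : ℝ)⁻¹ • (∑ i ∈ C g, γ i • φ i)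
                - (n1 g : ℝ)⁻¹ • (∑ i ∈ T g, φ i)⟫)
        + (1 / (N1 : ℝ)) * ∑ g, ∑ i ∈ C g, γ i * ε i := by
  have hweight : ∀ g x, ((n1 g : ℝ) / N1) * ((n1 g : ℝ)⁻¹ * x) = (N1 : ℝ)⁻¹ * x := by
    intro g x
    have : (n1 g : ℝ) ≠ 0 := by exact_mod_cast (hpos g).ne'
    field_simp
  set D : Fin K → EuclideanSpace ℝ (Fin p) :=
    fun g => ∑ i ∈ C g, γ i • φ i - ∑ i ∈ T g, φ i with hD
  set noise := ∑ g, ∑ i ∈ C g, γ i * ε i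
  have hlhs : (∑ g, ((n1 g : ℝ) / N1) * ((1 / (n1 g : ℝ)) * ∑ i ∈ C g, γ i * Y i))
        - (1 / (N1 : ℝ)) * ∑ g, ∑ i ∈ T g, ⟪η g, φ i⟫
      = (N1 : ℝ)⁻¹ * (∑ g, ⟪η g, D g⟫ + noise) := by
    simp only [one_div, hweight, sum_mul_eq_inner_sum_smul_add_sum_mul _ γ ε Y φ _ (hY _),
      hD, inner_sub_right, inner_sum, sum_add_distrib, sum_sub_distrib, ← mul_sum]
    ring
  have hrhs : ⟪ηbar, (N1 : ℝ)⁻¹ • (∑ g, ∑ i ∈ C g, γ i • φ i)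
          - (N1 : ℝ)⁻¹ • (∑ g, ∑ i ∈ T g, φ i)⟫
        + (∑ g, ((n1 g : ℝ) / N1) * ⟪η g - ηbar, (n1 g : ℝ)⁻¹ • (∑ i ∈ C g, γ i • φ i)
            - (n1 g : ℝ)⁻¹ • (∑ i ∈ T g, φ i)⟫)
        + (1 / (N1 : ℝ)) * noise
      = (N1 : ℝ)⁻¹ * (⟪ηbar, ∑ g, D g⟫ + ∑ g, ⟪η g - ηbar, D g⟫ + noise) := by
    simp only [← smul_sub, inner_smul_right, hweight, ← mul_sum, sum_sub_distrib, hD, one_div]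
    ring
  rw [hlhs, hrhs, sum_inner_eq_inner_sum_add_sum_inner_sub univ η D ηbar]

/-- Error decomposition for the aggregated (overall ATT) weighting estimator: the error
splits exactly into a global-imbalance term for the average coefficient, a sum of
local-imbalance terms for the coefficient deviations, and a weighted noise term. -/
theorem aggregated_error_decomposition {ι : Type*} {p K : ℕ} (hK : 0 < K)
    (T C : Fin K → Finset ι)
    (n1 : Fin K → ℕ) (hn1 : ∀ g, n1 g = (T g).card) (hpos : ∀ g, 0 < n1 g)
    (N1 : ℕ) (hN1 : N1 = ∑ g, n1 g)
    (φ : ι → EuclideanSpace ℝ (Fin p)) (γ ε Y : ι → ℝ)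
    (η : Fin K → EuclideanSpace ℝ (Fin p))
    (ηbar : EuclideanSpace ℝ (Fin p)) (hηbar : ηbar = (K : ℝ)⁻¹ • ∑ g, η g)
    (hY : ∀ g, ∀ i ∈ C g, Y i = ⟪η g, φ i⟫ + ε i) :
    (∑ g, ((n1 g : ℝ) / (N1 : ℝ)) * ((1 / (n1 g : ℝ)) * ∑ i ∈ C g, γ i * Y i))
        - (1 / (N1 : ℝ)) * ∑ g, ∑ i ∈ T g, ⟪η g, φ i⟫
      = ⟪ηbar, (N1 : ℝ)⁻¹ • (∑ g, ∑ i ∈ C g, γ i • φ i)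
              - (N1 : ℝ)⁻¹ • (∑ g, ∑ i ∈ T g, φ i)⟫
        + (∑ g, ((n1 g : ℝ) / (N1 : ℝ)) *
            ⟪η g - ηbar, (n1 g : ℝ)⁻¹ • (∑ i ∈ C g, γ i • φ i)
                - (n1 g : ℝ)⁻¹ • (∑ i ∈ T g, φ i)⟫)
        + (1 / (N1 : ℝ)) * ∑ g, ∑ i ∈ C g, γ i * ε i :=
  aggregated_error_decomposition_general T C n1 hpos N1 φ γ ε Y η ηbar hY
end

section
/- Consider K subgroups g = 1,…,K, each with treated set T_g of size n_{1g} > 0 and control set C_g, covariate vectors φ_i ∈ ℝ^p, weights γ_i on control units, and n₁ = Σ_g n_{1g}. Suppose each control outcome is noiseless and linear within subgroup: Y_i = ⟨η_{G_i}, φ_i⟩ with η_g ∈ ℝ^p, and let η̄ = (1/K) Σ_g η_g. Let μ̂₀ = Σ_g (n_{1g}/n₁) · (1/n_{1g}) Σ_{i∈C_g} γ_i Y_i and μ̃₀ = (1/n₁) Σ_g Σ_{i∈T_g} ⟨η_g, φ_i⟩. Then the bias is controlled by local and global balance: |μ̂₀ − μ̃₀| ≤ ‖η̄‖₂ · ‖(1/n₁)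 Σ_{i control} γ_i φ_i − (1/n₁) Σ_{i treated} φ_i‖₂ + Σ_{g=1}^K (n_{1g}/n₁) ‖η_g − η̄‖₂ · ‖(1/n_{1g}) Σ_{i∈C_g} γ_i φ_i − (1/n_{1g}) Σ_{i∈T_g} φ_i‖₂. -/
/-!
Within group `g` the bias is `⟪η g, v g⟫ / n₁`, where `v g` is the group's raw imbalance
`∑_{C g} γ i φ i - ∑_{T g} φ i`. Writing `η g = η̄ + (η g - η̄)`, the `η̄` parts add up to
`⟪η̄, ∑ g, v g⟫`, which Cauchy–Schwarz bounds by the global imbalance, and each remaining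
part is bounded by the local imbalance of its group.
-/

open scoped RealInnerProductSpace

section InnerProduct

variable {α E : Type*} [NormedAddCommGroup E] [InnerProductSpace ℝ E]

theorem abs_sum_inner_le_norm_mul_norm_sum_add (s : Finset α) (η v : α → E) (c : E) :
    |∑ g ∈ s, ⟪η g, v g⟫| ≤ ‖c‖ * ‖∑ g ∈ s, v g‖ + ∑ g ∈ s, ‖η g - c‖ * ‖v g‖ := by
  have split : ∑ g ∈ s, ⟪η g, v g⟫ = ⟪c, ∑ g ∈ s, v g⟫ + ∑ g ∈ s, ⟪η g - c, v g⟫ := by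
    simp only [inner_sum, inner_sub_left, Finset.sum_sub_distrib]
    ring
  calc |∑ g ∈ s, ⟪η g, v g⟫|
      ≤ |⟪c, ∑ g ∈ s, v g⟫| + ∑ g ∈ s, |⟪η g - c, v g⟫| :=
        split ▸ (abs_add_le _ _).trans (add_le_add_right (Finset.abs_sum_le_sum_abs _ _) _)
    _ ≤ ‖c‖ * ‖∑ g ∈ s, v g‖ + ∑ g ∈ s, ‖η g - c‖ * ‖v g‖ := by
      gcongr <;> exact abs_real_inner_le_norm _ _

theorem inner_sum_smul_eq_sum_mul {ι : Type*} (s : Finset ι) (η : E) (φ : ι → E)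
    (γ Y : ι → ℝ) (hY : ∀ i ∈ s, Y i = ⟪η, φ i⟫) :
    ⟪η, ∑ i ∈ s, γ i • φ i⟫ = ∑ i ∈ s, γ i * Y i := by
  rw [inner_sum]
  exact Finset.sum_congr rfl fun i hi => by rw [real_inner_smul_right, hY i hi]

end InnerProduct

theorem div_mul_one_div_mul {n : ℝ} (hn : n ≠ 0) (N x : ℝ) : n / N * (1 / n * x) = N⁻¹ * x := by
  field_simp

theorem norm_inv_smul_eq_div_mul_norm_inv_smul {E : Type*} [SeminormedAddCommGroup E]
    [NormedSpace ℝ E] {n : ℕ} (hn : 0 < n) (N : ℕ) (x : E) :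
    ‖(N : ℝ)⁻¹ • x‖ = (n : ℝ) / N * ‖(n : ℝ)⁻¹ • x‖ := by
  have hn' : (n : ℝ) ≠ 0 := by positivity
  rw [norm_smul, norm_smul, Real.norm_of_nonneg (by positivity),
    Real.norm_of_nonneg (by positivity)]
  field_simp

theorem aggregated_bias_bound_general {ι : Type*} {p K : ℕ}
    (T C : Fin K → Finset ι)
    (n1 : Fin K → ℕ) (hpos : ∀ g, 0 < n1 g)
    (N1 : ℕ)
    (φ : ι → EuclideanSpace ℝ (Fin p)) (γ Y : ι → ℝ)
    (η : Fin K → EuclideanSpace ℝ (Fin p))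
    (ηbar : EuclideanSpace ℝ (Fin p))
    (hY : ∀ g, ∀ i ∈ C g, Y i = ⟪η g, φ i⟫) :
    |(∑ g, ((n1 g : ℝ) / (N1 : ℝ)) * ((1 / (n1 g : ℝ)) * ∑ i ∈ C g, γ i * Y i))
        - (1 / (N1 : ℝ)) * ∑ g, ∑ i ∈ T g, ⟪η g, φ i⟫|
      ≤ ‖ηbar‖ * ‖(N1 : ℝ)⁻¹ • (∑ g, ∑ i ∈ C g, γ i • φ i)
              - (N1 : ℝ)⁻¹ • (∑ g, ∑ i ∈ T g, φ i)‖
        + ∑ g, ((n1 g : ℝ) / (N1 : ℝ)) * (‖η g - ηbar‖ *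
            ‖(n1 g : ℝ)⁻¹ • (∑ i ∈ C g, γ i • φ i)
                - (n1 g : ℝ)⁻¹ • (∑ i ∈ T g, φ i)‖) := by
  set v : Fin K → EuclideanSpace ℝ (Fin p) :=
    fun g => (N1 : ℝ)⁻¹ • (∑ i ∈ C g, γ i • φ i - ∑ i ∈ T g, φ i)
  have bias_eq : (∑ g, ((n1 g : ℝ) / (N1 : ℝ)) * ((1 / (n1 g : ℝ)) * ∑ i ∈ C g, γ i * Y i))
      - (1 / (N1 : ℝ)) * ∑ g, ∑ i ∈ T g, ⟪η g, φ i⟫ = ∑ g, ⟪η g, v g⟫ := by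
    rw [Finset.mul_sum, ← Finset.sum_sub_distrib]
    refine Finset.sum_congr rfl fun g _ => ?_
    rw [div_mul_one_div_mul (Nat.cast_ne_zero.mpr (hpos g).ne'), real_inner_smul_right,
      inner_sub_right, inner_sum_smul_eq_sum_mul _ _ _ _ _ (hY g), inner_sum, one_div, mul_sub]
  have global_eq : ∑ g, v g = (N1 : ℝ)⁻¹ • (∑ g, ∑ i ∈ C g, γ i • φ i)
      - (N1 : ℝ)⁻¹ • (∑ g, ∑ i ∈ T g, φ i) := by
    simp only [v, ← Finset.smul_sum, Finset.sum_sub_distrib, smul_sub]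
  have local_eq : ∀ g, ‖v g‖ = (n1 g : ℝ) / N1 *
      ‖(n1 g : ℝ)⁻¹ • (∑ i ∈ C g, γ i • φ i) - (n1 g : ℝ)⁻¹ • (∑ i ∈ T g, φ i)‖ := fun g => by
    rw [← smul_sub]
    exact norm_inv_smul_eq_div_mul_norm_inv_smul (hpos g) N1 _
  rw [bias_eq, ← global_eq]
  refine (abs_sum_inner_le_norm_mul_norm_sum_add _ η v ηbar).trans_eq ?_
  simp only [local_eq, mul_left_comm]

/-- The bias of the aggregated (overall ATT) weighting estimator is controlled by the
global imbalance (for the average coefficient) plus the weighted sum of local imbalances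
(for the coefficient deviations). -/
theorem aggregated_bias_bound {ι : Type*} {p K : ℕ} (hK : 0 < K)
    (T C : Fin K → Finset ι)
    (n1 : Fin K → ℕ) (hn1 : ∀ g, n1 g = (T g).card) (hpos : ∀ g, 0 < n1 g)
    (N1 : ℕ) (hN1 : N1 = ∑ g, n1 g)
    (φ : ι → EuclideanSpace ℝ (Fin p)) (γ Y : ι → ℝ)
    (η : Fin K → EuclideanSpace ℝ (Fin p))
    (ηbar : EuclideanSpace ℝ (Fin p)) (hηbar : ηbar = (K : ℝ)⁻¹ • ∑ g, η g)
    (hY : ∀ g, ∀ i ∈ C g, Y i = ⟪η g, φ i⟫) :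
    |(∑ g, ((n1 g : ℝ) / (N1 : ℝ)) * ((1 / (n1 g : ℝ)) * ∑ i ∈ C g, γ i * Y i))
        - (1 / (N1 : ℝ)) * ∑ g, ∑ i ∈ T g, ⟪η g, φ i⟫|
      ≤ ‖ηbar‖ * ‖(N1 : ℝ)⁻¹ • (∑ g, ∑ i ∈ C g, γ i • φ i)
              - (N1 : ℝ)⁻¹ • (∑ g, ∑ i ∈ T g, φ i)‖
        + ∑ g, ((n1 g : ℝ) / (N1 : ℝ)) * (‖η g - ηbar‖ *
            ‖(n1 g : ℝ)⁻¹ • (∑ i ∈ C g, γ i • φ i)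
                - (n1 g : ℝ)⁻¹ • (∑ i ∈ T g, φ i)‖) :=
  aggregated_bias_bound_general T C n1 hpos N1 φ γ Y η ηbar hY
end

section
/- Let (Ω, P) be a finite probability space carrying random variables X : Ω → 𝒳 (𝒳 finite), a binary treatment W : Ω → {0,1}, and a potential outcome Y⁰ : Ω → ℝ. Define the prognostic score m₀(x) = E[Y⁰ | X = x] and assume ignorability: Y⁰ is conditionally independent of W given X, i.e., for all x with P(X = x) > 0 and all y, P(W = 1, Y⁰ = y | X = x) = P(W = 1 | X = x) · P(Y⁰ = y | X = x). If P(W = 1) > 0, then the counterfactual control mean of the treated is identified by the prognostic score: E[Y⁰ | W = 1] = E[m₀(X) | W = 1]. -/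
open scoped Classical
open Finset

/-- Probability of an event on a finite space weighted by `p`. -/
noncomputable def finPr {Ω : Type*} [Fintype Ω] (p : Ω → ℝ) (A : Ω → Prop) : ℝ :=
  ∑ ω : Ω, if A ω then p ω else 0

/-- Conditional expectation `E[f ∣ A]` on a finite space weighted by `p`. -/
noncomputable def finCondExp {Ω : Type*} [Fintype Ω] (p : Ω → ℝ) (f : Ω → ℝ)
    (A : Ω → Prop) : ℝ :=
  (∑ ω : Ω, if A ω then p ω * f ω else 0) / finPr p A

/-! Under ignorability, on each stratum `X = x` the event `W = 1` is independent of `Y⁰`, so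
`E[Y⁰; W = 1, X = x] = P(W = 1, X = x) · m₀(x)`, which is also `E[m₀(X); W = 1, X = x]` because
`m₀(X)` is constant on the stratum. Summing over the strata gives equal numerators in
`E[Y⁰ ∣ W = 1]` and `E[m₀(X) ∣ W = 1]`. Independence is used through the decomposition
`E[Y⁰; A] = ∑ y · P(Y⁰ = y, A)` over the finitely many values of `Y⁰`. -/

/-- `E[f; A]`, the numerator of `finCondExp p f A`. -/
noncomputable def finSetIntegral {Ω : Type*} [Fintype Ω] (p f : Ω → ℝ) (A : Ω → Prop) : ℝ :=
  ∑ ω : Ω, if A ω then p ω * f ω else 0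

def FinCondIndep {Ω : Type*} [Fintype Ω] (p : Ω → ℝ) (A : Ω → Prop) (Y : Ω → ℝ)
    (B : Ω → Prop) : Prop :=
  0 < finPr p B → ∀ y : ℝ,
    finPr p (fun ω => A ω ∧ Y ω = y ∧ B ω) / finPr p B
      = (finPr p (fun ω => A ω ∧ B ω) / finPr p B) * (finPr p (fun ω => Y ω = y ∧ B ω) / finPr p B)

section

variable {Ω : Type*} [Fintype Ω] {p : Ω → ℝ}

theorem finCondExp_eq_finSetIntegral_div (p f : Ω → ℝ) (A : Ω → Prop) :
    finCondExp p f A = finSetIntegral p f A / finPr p A := rfl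

theorem finPr_congr (p : Ω → ℝ) {A B : Ω → Prop} (h : ∀ ω, A ω ↔ B ω) :
    finPr p A = finPr p B := by
  simp only [finPr, h]

theorem finPr_nonneg (hp0 : ∀ ω, 0 ≤ p ω) (A : Ω → Prop) : 0 ≤ finPr p A :=
  sum_nonneg fun ω _ => ite_nonneg (hp0 ω) le_rfl

theorem finSetIntegral_eq_finPr_mul_of_forall_eq (p : Ω → ℝ) {f : Ω → ℝ} {A : Ω → Prop} {c : ℝ}
    (hf : ∀ ω, A ω → f ω = c) : finSetIntegral p f A = finPr p A * c := by
  rw [finSetIntegral, finPr, sum_mul]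
  refine sum_congr rfl fun ω _ => ?_
  split_ifs with hA
  · rw [hf ω hA]
  · rw [zero_mul]

theorem eq_zero_of_finPr_eq_zero (hp0 : ∀ ω, 0 ≤ p ω) {B : Ω → Prop} (hB : finPr p B = 0)
    {ω : Ω} (hω : B ω) : p ω = 0 := by
  simpa [hω] using (sum_eq_zero_iff_of_nonneg fun ω _ => ite_nonneg (hp0 ω) le_rfl).mp hB ω
    (mem_univ ω)

theorem finSetIntegral_eq_zero_of_finPr_eq_zero (hp0 : ∀ ω, 0 ≤ p ω) (f : Ω → ℝ)
    {A B : Ω → Prop} (hB : finPr p B = 0) (hAB : ∀ ω, A ω → B ω) :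
    finSetIntegral p f A = 0 := by
  refine sum_eq_zero fun ω _ => ?_
  split_ifs with hA
  · rw [eq_zero_of_finPr_eq_zero hp0 hB (hAB ω hA), zero_mul]
  · rfl

theorem finSetIntegral_eq_sum_fiberwise {𝒳 : Type*} [Fintype 𝒳] (X : Ω → 𝒳) (p f : Ω → ℝ)
    (A : Ω → Prop) :
    finSetIntegral p f A = ∑ x : 𝒳, finSetIntegral p f (fun ω => A ω ∧ X ω = x) := by
  simp only [finSetIntegral]
  rw [sum_comm]
  refine sum_congr rfl fun ω _ => ?_
  by_cases hA : A ω <;> simp [hA]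

theorem finSetIntegral_eq_sum_image_mul_finPr (p f : Ω → ℝ) (A : Ω → Prop) :
    finSetIntegral p f A = ∑ y ∈ univ.image f, y * finPr p (fun ω => f ω = y ∧ A ω) := by
  rw [finSetIntegral, ← sum_fiberwise_of_maps_to (t := univ.image f) (g := f)
    (fun ω _ => mem_image_of_mem f (mem_univ ω))]
  refine sum_congr rfl fun y _ => ?_
  rw [finPr, mul_sum, sum_filter]
  refine sum_congr rfl fun ω _ => ?_
  by_cases hy : f ω = y <;> by_cases hA : A ω <;> simp [hy, hA, mul_comm]

theorem FinCondIndep.finPr_mul_finSetIntegral_and {A B : Ω → Prop} {Y : Ω → ℝ}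
    (hindep : FinCondIndep p A Y B) (hB : 0 < finPr p B) :
    finPr p B * finSetIntegral p Y (fun ω => A ω ∧ B ω)
      = finPr p (fun ω => A ω ∧ B ω) * finSetIntegral p Y B := by
  have hmul : ∀ y, finPr p B * finPr p (fun ω => Y ω = y ∧ A ω ∧ B ω)
      = finPr p (fun ω => A ω ∧ B ω) * finPr p (fun ω => Y ω = y ∧ B ω) := fun y => by
    have h := hindep hB y
    rw [finPr_congr p fun ω => and_left_comm]
    field_simp at h
    linarith
  simp only [finSetIntegral_eq_sum_image_mul_finPr p Y, mul_sum, mul_left_comm _ _ (finPr _ _),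
    hmul]

theorem finSetIntegral_and_eq_finPr_mul_finCondExp (hp0 : ∀ ω, 0 ≤ p ω)
    {A B : Ω → Prop} {Y : Ω → ℝ} (hindep : FinCondIndep p A Y B) :
    finSetIntegral p Y (fun ω => A ω ∧ B ω)
      = finPr p (fun ω => A ω ∧ B ω) * finCondExp p Y B := by
  rw [finCondExp_eq_finSetIntegral_div]
  rcases (finPr_nonneg hp0 B).eq_or_lt with hB | hB
  · rw [finSetIntegral_eq_zero_of_finPr_eq_zero hp0 Y hB.symm fun ω h => h.2, ← hB, div_zero,
      mul_zero]
  · rw [← mul_div_assoc, eq_div_iff hB.ne', mul_comm, hindep.finPr_mul_finSetIntegral_and hB]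

end

theorem identification_by_prognostic_score_general {Ω 𝒳 : Type*} [Fintype Ω] [Fintype 𝒳]
    (p : Ω → ℝ) (hp0 : ∀ ω, 0 ≤ p ω)
    (X : Ω → 𝒳) (W : Ω → Bool) (Y0 : Ω → ℝ)
    (m0 : 𝒳 → ℝ)
    (hm0 : ∀ x, m0 x = finCondExp p Y0 (fun ω => X ω = x))
    (hignore : ∀ x, 0 < finPr p (fun ω => X ω = x) → ∀ y : ℝ,
      finPr p (fun ω => W ω = true ∧ Y0 ω = y ∧ X ω = x) / finPr p (fun ω => X ω = x)
        = (finPr p (fun ω => W ω = true ∧ X ω = x) / finPr p (fun ω => X ω = x))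
          * (finPr p (fun ω => Y0 ω = y ∧ X ω = x) / finPr p (fun ω => X ω = x))) :
    finCondExp p Y0 (fun ω => W ω = true)
      = finCondExp p (fun ω => m0 (X ω)) (fun ω => W ω = true) := by
  rw [finCondExp_eq_finSetIntegral_div, finCondExp_eq_finSetIntegral_div,
    finSetIntegral_eq_sum_fiberwise X p Y0, finSetIntegral_eq_sum_fiberwise X p]
  congr 1
  refine sum_congr rfl fun x _ => ?_
  have hm0X : ∀ ω, W ω = true ∧ X ω = x → m0 (X ω) = m0 x := fun ω h => by rw [h.2]
  rw [finSetIntegral_eq_finPr_mul_of_forall_eq p hm0X, hm0 x]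
  exact finSetIntegral_and_eq_finPr_mul_finCondExp hp0 (hignore x)

/-- Under ignorability (`Y⁰ ⟂ W ∣ X`), the counterfactual control mean of the treated is
identified by the prognostic score: `E[Y⁰ ∣ W = 1] = E[m₀(X) ∣ W = 1]`. -/
theorem identification_by_prognostic_score {Ω 𝒳 : Type*} [Fintype Ω] [Fintype 𝒳]
    (p : Ω → ℝ) (hp0 : ∀ ω, 0 ≤ p ω) (hp1 : ∑ ω : Ω, p ω = 1)
    (X : Ω → 𝒳) (W : Ω → Bool) (Y0 : Ω → ℝ)
    (m0 : 𝒳 → ℝ)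
    (hm0 : ∀ x, m0 x = finCondExp p Y0 (fun ω => X ω = x))
    (hignore : ∀ x, 0 < finPr p (fun ω => X ω = x) → ∀ y : ℝ,
      finPr p (fun ω => W ω = true ∧ Y0 ω = y ∧ X ω = x) / finPr p (fun ω => X ω = x)
        = (finPr p (fun ω => W ω = true ∧ X ω = x) / finPr p (fun ω => X ω = x))
          * (finPr p (fun ω => Y0 ω = y ∧ X ω = x) / finPr p (fun ω => X ω = x)))
    (hW : 0 < finPr p (fun ω => W ω = true)) :
    finCondExp p Y0 (fun ω => W ω = true)
      = finCondExp p (fun ω => m0 (X ω)) (fun ω => W ω = true) :=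
  identification_by_prognostic_score_general p hp0 X W Y0 m0 hm0 hignore
end

section
/- (Dual characterization of partially pooled balancing weights.) Consider n units with binary treatment W_i ∈ {0,1}, stratum labels G_i ∈ {1,…,K}, covariate vectors φ_i ∈ ℝ^p, stratum treated counts n_{1g} = |{i : G_i = g, W_i = 1}|, and regularization parameters λ_g > 0. Define the primal problem over weights γ ∈ ℝ^n (on control units): minimize Σ_{g=1}^K [ (1/(2λ_g)) ‖Σ_{G_i = g, W_i = 0} γ_i φ_i − Σ_{G_i = g, W_i = 1} φ_i‖₂² + (1/2) Σ_{G_i = g, W_i = 0} γ_i² ] subject to exact global balance Σ_{W_i = 0} γ_i φ_i = Σ_{W_i = 1} φ_i, the fine-balance constraints Σ_{G_i = g, W_i = 0} γ_i = n_{1g} for each g, and nonnegativity γ_i ≥ 0. Define, for α_g ∈ ℝ and β_g ∈ ℝ^p, the balancing loss ℒ_g(α_g, β_g) = Σ_{G_i = g, W_i = 0} (1/2)[α_g + ⟨β_g, φ_i⟩]₊² − Σ_{G_i = g, W_i = 1} (α_g + ⟨β_g, φ_i⟩), and the dual objective D(α, β, μ_β) = Σ_{g=1}^K ℒ_g(α_g,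 β_g) + Σ_{g=1}^K (λ_g/2) ‖β_g − μ_β‖₂². If a feasible solution to the primal problem exists and (α̂, β̂₁,…,β̂_K, μ̂_β) minimizes D, then the weights defined by γ̂_i = [α̂_{G_i} + ⟨β̂_{G_i}, φ_i⟩]₊ for control units solve the primal problem. -/
open scoped RealInnerProductSpace
open Finset

variable {ι : Type*} [Fintype ι] {p K : ℕ}

/-- Primal objective of the partially pooled approximate balancing weights problem:
for each stratum `g`, the scaled squared local covariate imbalance plus half the sum of
squared weights over the controls in `g`. -/
noncomputable def primalObj [DecidableEq (Fin K)] (W : ι → Bool) (G : ι → Fin K)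
    (φ : ι → EuclideanSpace ℝ (Fin p)) (lam : Fin K → ℝ) (γ : ι → ℝ) : ℝ :=
  ∑ g : Fin K,
    ((1 / (2 * lam g)) *
        ‖(∑ i ∈ univ.filter fun i => G i = g ∧ W i = false, γ i • φ i)
            - ∑ i ∈ univ.filter fun i => G i = g ∧ W i = true, φ i‖ ^ 2
      + (1 / 2) * ∑ i ∈ univ.filter fun i => G i = g ∧ W i = false, γ i ^ 2)

/-- Feasibility for the primal problem: exact global covariate balance, fine-balance
(the control weights in each stratum sum to the number of treated units `n_{1g}`), and
nonnegativity of the weights on control units. -/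
def primalFeasible [DecidableEq (Fin K)] (W : ι → Bool) (G : ι → Fin K)
    (φ : ι → EuclideanSpace ℝ (Fin p)) (γ : ι → ℝ) : Prop :=
  ((∑ i ∈ univ.filter fun i => W i = false, γ i • φ i)
      = ∑ i ∈ univ.filter fun i => W i = true, φ i)
    ∧ (∀ g : Fin K, (∑ i ∈ univ.filter fun i => G i = g ∧ W i = false, γ i)
        = ((univ.filter fun i => G i = g ∧ W i = true).card : ℝ))
    ∧ (∀ i, W i = false → 0 ≤ γ i)

/-- The balancing loss `ℒ_g(α_g, β_g)` for stratum `g`. -/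
noncomputable def balancingLoss [DecidableEq (Fin K)] (W : ι → Bool) (G : ι → Fin K)
    (φ : ι → EuclideanSpace ℝ (Fin p)) (g : Fin K) (a : ℝ)
    (b : EuclideanSpace ℝ (Fin p)) : ℝ :=
  (∑ i ∈ univ.filter fun i => G i = g ∧ W i = false,
      (1 / 2) * (max (a + ⟪b, φ i⟫) 0) ^ 2)
    - ∑ i ∈ univ.filter fun i => G i = g ∧ W i = true, (a + ⟪b, φ i⟫)

/-- The dual objective: sum of the stratum balancing losses plus squared-`L²` shrinkage
of the stratum coefficients `β_g` toward the global coefficient `μ_β`. -/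
noncomputable def dualObj [DecidableEq (Fin K)] (W : ι → Bool) (G : ι → Fin K)
    (φ : ι → EuclideanSpace ℝ (Fin p)) (lam : Fin K → ℝ) (α : Fin K → ℝ)
    (β : Fin K → EuclideanSpace ℝ (Fin p)) (μβ : EuclideanSpace ℝ (Fin p)) : ℝ :=
  (∑ g : Fin K, balancingLoss W G φ g (α g) (β g))
    + ∑ g : Fin K, (lam g / 2) * ‖β g - μβ‖ ^ 2

/-!
Weak duality with complementary slackness. Let `s_i = α_{G_i} + ⟪β_{G_i}, φ_i⟫` be the score of
unit `i` and `x_g(γ)` the local covariate imbalance of `γ` in stratum `g`. Completing the square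
in each stratum and using fine and global balance, every feasible `γ` satisfies

  `primalObj γ + dualObj α β μ`
  `  = ∑_g ‖x_g(γ) + λ_g (β_g - μ)‖² / (2 λ_g) + ∑_{W_i = 0} (γ_i² / 2 + [s_i]₊² / 2 - γ_i s_i)`,

and both sums are nonnegative, the second by Fenchel–Young since `γ ≥ 0`.

At a minimiser the dual objective grows at most quadratically along every direction `d`, with
linear coefficient the directional derivative `L(d)`, so `L(d) = 0`. Taking `d` to be the
gradient itself shows that `γ̂ = [s]₊` is fine-balanced, that `x_g(γ̂) = -λ_g (β̂_g - μ̂)`, and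
that these vectors sum to zero. Hence `γ̂` is feasible and both sums vanish at `γ̂`, so
`primalObj γ̂ = -dualObj α̂ β̂ μ̂ ≤ primalObj γ`.
-/

theorem half_sq_max_add_le (x h : ℝ) :
    1 / 2 * max (x + h) 0 ^ 2 ≤ 1 / 2 * max x 0 ^ 2 + max x 0 * h + 1 / 2 * h ^ 2 := by
  rcases le_total x 0 with hx | hx <;> rcases le_total (x + h) 0 with hxh | hxh <;>
    simp only [max_eq_left, max_eq_right, hx, hxh] <;> nlinarith

theorem mul_le_half_sq_add_half_sq_max {c x : ℝ} (hc : 0 ≤ c) :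
    c * x ≤ 1 / 2 * c ^ 2 + 1 / 2 * max x 0 ^ 2 := by
  nlinarith [mul_le_mul_of_nonneg_left (le_max_left x 0) hc, sq_nonneg (c - max x 0)]

theorem max_mul_max_sub_self (x : ℝ) : max x 0 * (max x 0 - x) = 0 := by
  rcases le_total x 0 with hx | hx <;> simp [hx]

theorem eq_zero_of_forall_le_add_mul_add_sq {a L Q : ℝ}
    (h : ∀ t : ℝ, a ≤ a + t * L + t ^ 2 * Q) : L = 0 := by
  have hdisc := discrim_le_zero (a := Q) (b := L) (c := 0) fun t => by linarith [h t]
  rw [discrim, mul_zero, sub_zero] at hdisc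
  nlinarith [sq_nonneg L]

section Strata

variable [DecidableEq (Fin K)] (W : ι → Bool) (G : ι → Fin K) (φ : ι → EuclideanSpace ℝ (Fin p))

def stratum (g : Fin K) (b : Bool) : Finset ι :=
  univ.filter fun i => G i = g ∧ W i = b

def localImbalance (γ : ι → ℝ) (g : Fin K) : EuclideanSpace ℝ (Fin p) :=
  ∑ i ∈ stratum W G g false, γ i • φ i - ∑ i ∈ stratum W G g true, φ i

def countImbalance (γ : ι → ℝ) (g : Fin K) : ℝ :=
  ∑ i ∈ stratum W G g false, γ i - (stratum W G g true).card

noncomputable def score (α : Fin K → ℝ) (β : Fin K → EuclideanSpace ℝ (Fin p)) (i : ι) : ℝ :=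
  α (G i) + ⟪β (G i), φ i⟫

theorem sum_stratum {M : Type*} [AddCommMonoid M] (b : Bool) (f : ι → M) :
    ∑ g, ∑ i ∈ stratum W G g b, f i = ∑ i ∈ univ.filter fun i => W i = b, f i := by
  rw [← Finset.sum_fiberwise _ G f]
  refine Finset.sum_congr rfl fun g _ => Finset.sum_congr ?_ fun _ _ => rfl
  ext i
  simp [stratum, and_comm]

variable {W G φ}

theorem primalFeasible_iff (γ : ι → ℝ) :
    primalFeasible W G φ γ ↔ ∑ g, localImbalance W G φ γ g = 0 ∧
      (∀ g, countImbalance W G γ g = 0) ∧ ∀ i, W i = false → 0 ≤ γ i := by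
  simp only [localImbalance, countImbalance, Finset.sum_sub_distrib, sum_stratum W G, sub_eq_zero]
  rfl

theorem score_of_mem_stratum {α : Fin K → ℝ} {β : Fin K → EuclideanSpace ℝ (Fin p)} {g : Fin K}
    {b : Bool} {i : ι} (hi : i ∈ stratum W G g b) : score G φ α β i = α g + ⟪β g, φ i⟫ := by
  rw [score, (Finset.mem_filter.mp hi).2.1]

omit [Fintype ι] [DecidableEq (Fin K)] in
theorem score_add_smul (α σ : Fin K → ℝ) (β v : Fin K → EuclideanSpace ℝ (Fin p)) (t : ℝ)
    (i : ι) : score G φ (α + t • σ) (β + t • v) i = score G φ α β i + t * score G φ σ v i := by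
  simp only [score, Pi.add_apply, Pi.smul_apply, smul_eq_mul, inner_add_left,
    real_inner_smul_left]
  ring

theorem primalObj_eq (lam : Fin K → ℝ) (γ : ι → ℝ) :
    primalObj W G φ lam γ = ∑ g, 1 / (2 * lam g) * ‖localImbalance W G φ γ g‖ ^ 2
      + ∑ i ∈ univ.filter fun i => W i = false, 1 / 2 * γ i ^ 2 := by
  rw [← sum_stratum W G, ← Finset.sum_add_distrib]
  simp only [primalObj, Finset.mul_sum]
  rfl

theorem balancingLoss_eq (α : Fin K → ℝ) (β : Fin K → EuclideanSpace ℝ (Fin p)) (g : Fin K) :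
    balancingLoss W G φ g (α g) (β g) = ∑ i ∈ stratum W G g false,
      1 / 2 * max (score G φ α β i) 0 ^ 2 - ∑ i ∈ stratum W G g true, score G φ α β i := by
  simp only [balancingLoss]
  congr 1 <;> refine Finset.sum_congr rfl fun i hi => ?_ <;> rw [score_of_mem_stratum hi]

theorem dualObj_eq (lam α : Fin K → ℝ) (β : Fin K → EuclideanSpace ℝ (Fin p))
    (μ : EuclideanSpace ℝ (Fin p)) :
    dualObj W G φ lam α β μ = ∑ i ∈ univ.filter fun i => W i = false,
        1 / 2 * max (score G φ α β i) 0 ^ 2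
      - ∑ i ∈ univ.filter fun i => W i = true, score G φ α β i
      + ∑ g, lam g / 2 * ‖β g - μ‖ ^ 2 := by
  simp only [dualObj, balancingLoss_eq, Finset.sum_sub_distrib, sum_stratum W G]

theorem sum_mul_score_sub_sum_score (γ : ι → ℝ) (α : Fin K → ℝ)
    (β : Fin K → EuclideanSpace ℝ (Fin p)) :
    ∑ i ∈ univ.filter (fun i => W i = false), γ i * score G φ α β i
        - ∑ i ∈ univ.filter fun i => W i = true, score G φ α β i
      = ∑ g, (α g * countImbalance W G γ g + ⟪β g, localImbalance W G φ γ g⟫) := by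
  rw [← sum_stratum W G, ← sum_stratum W G, ← Finset.sum_sub_distrib]
  refine Finset.sum_congr rfl fun g _ => ?_
  have hctrl : ∑ i ∈ stratum W G g false, γ i * score G φ α β i
      = α g * ∑ i ∈ stratum W G g false, γ i + ⟪β g, ∑ i ∈ stratum W G g false, γ i • φ i⟫ := by
    rw [Finset.mul_sum, inner_sum, ← Finset.sum_add_distrib]
    refine Finset.sum_congr rfl fun i hi => ?_
    rw [score_of_mem_stratum hi, real_inner_smul_right]
    ring
  have htrt : ∑ i ∈ stratum W G g true, score G φ α β i
      = α g * (stratum W G g true).card + ⟪β g, ∑ i ∈ stratum W G g true, φ i⟫ := by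
    rw [inner_sum, mul_comm, ← nsmul_eq_mul, ← Finset.sum_const, ← Finset.sum_add_distrib]
    exact Finset.sum_congr rfl fun i hi => score_of_mem_stratum hi
  rw [hctrl, htrt, countImbalance, localImbalance, inner_sub_right]
  ring

end Strata

theorem one_div_two_mul_norm_add_smul_sq {F : Type*} [NormedAddCommGroup F]
    [InnerProductSpace ℝ F] {c : ℝ} (hc : c ≠ 0) (x y : F) :
    1 / (2 * c) * ‖x + c • y‖ ^ 2 = 1 / (2 * c) * ‖x‖ ^ 2 + ⟪y, x⟫ + c / 2 * ‖y‖ ^ 2 := by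
  rw [norm_add_sq_real, norm_smul, real_inner_smul_right, mul_pow, Real.norm_eq_abs, sq_abs,
    real_inner_comm]
  field_simp

section Duality

variable [DecidableEq (Fin K)] {W : ι → Bool} {G : ι → Fin K} {φ : ι → EuclideanSpace ℝ (Fin p)}
  {lam : Fin K → ℝ}

theorem sum_mul_score_sub_sum_score_of_feasible {γ : ι → ℝ} (hγ : primalFeasible W G φ γ)
    (α : Fin K → ℝ) (β : Fin K → EuclideanSpace ℝ (Fin p)) (μ : EuclideanSpace ℝ (Fin p)) :
    ∑ i ∈ univ.filter (fun i => W i = false), γ i * score G φ α β i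
        - ∑ i ∈ univ.filter fun i => W i = true, score G φ α β i
      = ∑ g, ⟪β g - μ, localImbalance W G φ γ g⟫ := by
  obtain ⟨hbalance, hcount, -⟩ := (primalFeasible_iff γ).1 hγ
  simp only [sum_mul_score_sub_sum_score, hcount, mul_zero, zero_add, inner_sub_left,
    Finset.sum_sub_distrib, ← inner_sum, hbalance, inner_zero_right, sub_zero]

theorem primalObj_add_dualObj_of_feasible (hlam : ∀ g, lam g ≠ 0) {γ : ι → ℝ}
    (hγ : primalFeasible W G φ γ) (α : Fin K → ℝ) (β : Fin K → EuclideanSpace ℝ (Fin p))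
    (μ : EuclideanSpace ℝ (Fin p)) :
    primalObj W G φ lam γ + dualObj W G φ lam α β μ
      = ∑ g, 1 / (2 * lam g) * ‖localImbalance W G φ γ g + lam g • (β g - μ)‖ ^ 2
        + ∑ i ∈ univ.filter fun i => W i = false,
            (1 / 2 * γ i ^ 2 + 1 / 2 * max (score G φ α β i) 0 ^ 2 - γ i * score G φ α β i) := by
  have hpair := sum_mul_score_sub_sum_score_of_feasible hγ α β μ
  simp only [primalObj_eq, dualObj_eq, one_div_two_mul_norm_add_smul_sq (hlam _),
    Finset.sum_add_distrib, Finset.sum_sub_distrib] at hpair ⊢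
  linarith

theorem primalObj_add_dualObj_nonneg (hlam : ∀ g, 0 < lam g) {γ : ι → ℝ}
    (hγ : primalFeasible W G φ γ) (α : Fin K → ℝ) (β : Fin K → EuclideanSpace ℝ (Fin p))
    (μ : EuclideanSpace ℝ (Fin p)) :
    0 ≤ primalObj W G φ lam γ + dualObj W G φ lam α β μ := by
  rw [primalObj_add_dualObj_of_feasible (fun g => (hlam g).ne') hγ]
  refine add_nonneg (Finset.sum_nonneg fun g _ => ?_) (Finset.sum_nonneg fun i hi => ?_)
  · have := hlam g
    positivity
  · have := mul_le_half_sq_add_half_sq_max (x := score G φ α β i)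
      (hγ.2.2 i (Finset.mem_filter.mp hi).2)
    linarith

theorem dualObj_add_smul_le (α σ : Fin K → ℝ) (β v : Fin K → EuclideanSpace ℝ (Fin p))
    (μ w : EuclideanSpace ℝ (Fin p)) (t : ℝ) :
    dualObj W G φ lam (α + t • σ) (β + t • v) (μ + t • w) ≤ dualObj W G φ lam α β μ
      + t * (∑ i ∈ univ.filter (fun i => W i = false),
              max (score G φ α β i) 0 * score G φ σ v i
            - ∑ i ∈ univ.filter (fun i => W i = true), score G φ σ v i
            + ∑ g, lam g * ⟪β g - μ, v g - w⟫)
      + t ^ 2 * (∑ i ∈ univ.filter (fun i => W i = false), 1 / 2 * score G φ σ v i ^ 2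
            + ∑ g, lam g / 2 * ‖v g - w‖ ^ 2) := by
  have hctrl : ∑ i ∈ univ.filter (fun i => W i = false),
        1 / 2 * max (score G φ α β i + t * score G φ σ v i) 0 ^ 2
      ≤ ∑ i ∈ univ.filter (fun i => W i = false), 1 / 2 * max (score G φ α β i) 0 ^ 2
        + t * ∑ i ∈ univ.filter (fun i => W i = false),
            max (score G φ α β i) 0 * score G φ σ v i
        + t ^ 2 * ∑ i ∈ univ.filter (fun i => W i = false), 1 / 2 * score G φ σ v i ^ 2 := by
    simp only [Finset.mul_sum, ← Finset.sum_add_distrib]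
    refine Finset.sum_le_sum fun i _ => ?_
    linarith [half_sq_max_add_le (score G φ α β i) (t * score G φ σ v i)]
  have hshrink : ∀ g, lam g / 2 * ‖(β + t • v) g - (μ + t • w)‖ ^ 2
      = lam g / 2 * ‖β g - μ‖ ^ 2 + t * (lam g * ⟪β g - μ, v g - w⟫)
        + t ^ 2 * (lam g / 2 * ‖v g - w‖ ^ 2) := by
    intro g
    rw [Pi.add_apply, Pi.smul_apply, show β g + t • v g - (μ + t • w) = β g - μ + t • (v g - w)
      by rw [smul_sub]; abel, norm_add_sq_real, norm_smul, real_inner_smul_right, mul_pow,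
      Real.norm_eq_abs, sq_abs]
    ring
  simp only [dualObj_eq, score_add_smul, hshrink, Finset.sum_add_distrib, Finset.mul_sum,
    mul_add, mul_sub] at hctrl ⊢
  linarith

theorem dualObj_first_order {αh : Fin K → ℝ} {βh : Fin K → EuclideanSpace ℝ (Fin p)}
    {μh : EuclideanSpace ℝ (Fin p)}
    (hmin : ∀ α β μ, dualObj W G φ lam αh βh μh ≤ dualObj W G φ lam α β μ)
    (σ : Fin K → ℝ) (v : Fin K → EuclideanSpace ℝ (Fin p)) (w : EuclideanSpace ℝ (Fin p)) :
    ∑ g, (σ g * countImbalance W G (fun i => max (score G φ αh βh i) 0) g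
        + ⟪v g, localImbalance W G φ (fun i => max (score G φ αh βh i) 0) g
          + lam g • (βh g - μh)⟫)
      - ⟪w, ∑ g, lam g • (βh g - μh)⟫ = 0 := by
  have h := eq_zero_of_forall_le_add_mul_add_sq fun t =>
    (hmin _ _ _).trans (dualObj_add_smul_le αh σ βh v μh w t)
  rw [sum_mul_score_sub_sum_score] at h
  simp only [inner_sub_right, real_inner_comm (v _), real_inner_comm w] at h
  simp only [inner_add_right, real_inner_smul_right, inner_sum, Finset.sum_add_distrib,
    inner_sub_right, mul_sub, Finset.sum_sub_distrib] at h ⊢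
  linarith

theorem dualObj_stationary {αh : Fin K → ℝ} {βh : Fin K → EuclideanSpace ℝ (Fin p)}
    {μh : EuclideanSpace ℝ (Fin p)}
    (hmin : ∀ α β μ, dualObj W G φ lam αh βh μh ≤ dualObj W G φ lam α β μ) :
    (∀ g, countImbalance W G (fun i => max (score G φ αh βh i) 0) g = 0) ∧
      (∀ g, localImbalance W G φ (fun i => max (score G φ αh βh i) 0) g
        + lam g • (βh g - μh) = 0) ∧
      ∑ g, lam g • (βh g - μh) = 0 := by
  set m : ι → ℝ := fun i => max (score G φ αh βh i) 0
  set r : Fin K → ℝ := countImbalance W G m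
  set u : Fin K → EuclideanSpace ℝ (Fin p) :=
    fun g => localImbalance W G φ m g + lam g • (βh g - μh)
  set pool : EuclideanSpace ℝ (Fin p) := ∑ g, lam g • (βh g - μh)
  have hsq := dualObj_first_order hmin r u (-pool)
  simp only [inner_neg_left, sub_neg_eq_add] at hsq
  change ∑ g, (r g * r g + ⟪u g, u g⟫) + ⟪pool, pool⟫ = 0 at hsq
  simp only [real_inner_self_eq_norm_sq] at hsq
  have hnonneg : ∀ g ∈ univ, 0 ≤ r g * r g + ‖u g‖ ^ 2 :=
    fun g _ => add_nonneg (mul_self_nonneg _) (sq_nonneg _)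
  obtain ⟨hsum, hpool⟩ :=
    (add_eq_zero_iff_of_nonneg (Finset.sum_nonneg hnonneg) (sq_nonneg _)).1 hsq
  have hterm := (Finset.sum_eq_zero_iff_of_nonneg hnonneg).1 hsum
  have hru : ∀ g, r g = 0 ∧ u g = 0 := fun g => by
    obtain ⟨hr, hu⟩ := (add_eq_zero_iff_of_nonneg (mul_self_nonneg _) (sq_nonneg _)).1
      (hterm g (Finset.mem_univ g))
    exact ⟨mul_self_eq_zero.1 hr, norm_eq_zero.1 (pow_eq_zero_iff two_ne_zero |>.1 hu)⟩
  exact ⟨fun g => (hru g).1, fun g => (hru g).2,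
    norm_eq_zero.1 (pow_eq_zero_iff two_ne_zero |>.1 hpool)⟩

end Duality

theorem dual_solves_primal_general [DecidableEq (Fin K)] (W : ι → Bool) (G : ι → Fin K)
    (φ : ι → EuclideanSpace ℝ (Fin p)) (lam : Fin K → ℝ) (hlam : ∀ g, 0 < lam g)
    (αh : Fin K → ℝ) (βh : Fin K → EuclideanSpace ℝ (Fin p))
    (μh : EuclideanSpace ℝ (Fin p))
    (hmin : ∀ (α : Fin K → ℝ) (β : Fin K → EuclideanSpace ℝ (Fin p))
        (μβ : EuclideanSpace ℝ (Fin p)),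
        dualObj W G φ lam αh βh μh ≤ dualObj W G φ lam α β μβ) :
    primalFeasible W G φ (fun i => max (αh (G i) + ⟪βh (G i), φ i⟫) 0)
      ∧ ∀ γ : ι → ℝ, primalFeasible W G φ γ →
          primalObj W G φ lam (fun i => max (αh (G i) + ⟪βh (G i), φ i⟫) 0)
            ≤ primalObj W G φ lam γ := by
  change primalFeasible W G φ (fun i => max (score G φ αh βh i) 0) ∧
    ∀ γ, primalFeasible W G φ γ →
      primalObj W G φ lam (fun i => max (score G φ αh βh i) 0) ≤ primalObj W G φ lam γ
  obtain ⟨hcount, hlocal, hpool⟩ := dualObj_stationary hmin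
  have hfeas : primalFeasible W G φ (fun i => max (score G φ αh βh i) 0) := by
    refine (primalFeasible_iff _).2 ⟨?_, hcount, fun i _ => le_max_right _ _⟩
    have hsum := Finset.sum_eq_zero (s := univ) fun g _ => hlocal g
    rwa [Finset.sum_add_distrib, hpool, add_zero] at hsum
  have hgap : primalObj W G φ lam (fun i => max (score G φ αh βh i) 0)
      + dualObj W G φ lam αh βh μh = 0 := by
    rw [primalObj_add_dualObj_of_feasible (fun g => (hlam g).ne') hfeas]
    simp only [hlocal, norm_zero, ne_eq, OfNat.ofNat_ne_zero, not_false_eq_true, zero_pow,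
      mul_zero, Finset.sum_const_zero, zero_add]
    exact Finset.sum_eq_zero fun i _ => by
      linear_combination max_mul_max_sub_self (score G φ αh βh i)
  exact ⟨hfeas, fun γ hγ => by linarith [primalObj_add_dualObj_nonneg hlam hγ αh βh μh]⟩

/-- Dual characterization of the partially pooled balancing weights: if the primal
problem is feasible and `(α̂, β̂, μ̂_β)` minimizes the dual objective, then the weights
`γ̂_i = [α̂_{G_i} + ⟪β̂_{G_i}, φ_i⟫]₊` are feasible and minimize the primal objective. -/
theorem dual_solves_primal [DecidableEq (Fin K)] (W : ι → Bool) (G : ι → Fin K)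
    (φ : ι → EuclideanSpace ℝ (Fin p)) (lam : Fin K → ℝ) (hlam : ∀ g, 0 < lam g)
    (hfeas : ∃ γ : ι → ℝ, primalFeasible W G φ γ)
    (αh : Fin K → ℝ) (βh : Fin K → EuclideanSpace ℝ (Fin p))
    (μh : EuclideanSpace ℝ (Fin p))
    (hmin : ∀ (α : Fin K → ℝ) (β : Fin K → EuclideanSpace ℝ (Fin p))
        (μβ : EuclideanSpace ℝ (Fin p)),
        dualObj W G φ lam αh βh μh ≤ dualObj W G φ lam α β μβ) :
    primalFeasible W G φ (fun i => max (αh (G i) + ⟪βh (G i), φ i⟫) 0)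
      ∧ ∀ γ : ι → ℝ, primalFeasible W G φ γ →
          primalObj W G φ lam (fun i => max (αh (G i) + ⟪βh (G i), φ i⟫) 0)
            ≤ primalObj W G φ lam γ :=
  dual_solves_primal_general W G φ lam hlam αh βh μh hmin
end
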